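/- arXiv:1803.04892 — 9 statements merged into one kernel-verified Lean document; each statement's English description precedes it below -/
import Mathlib

section
/- Let g : (0,∞)⁴ → (0,∞) be a function of (σ², P, V, C) satisfying for all positive arguments and all λ > 0: (shares scaling) g(σ², λP, V/λ, C) = g(σ², P, V, C); (money scaling) g(σ², λP, V, λC) = g(σ², P, V, C); (time scaling) g(λσ², P, λV, C) = λ·g(σ², P, V, C). Then there exists a function f : (0,∞) → (0,∞) such that g(σ², P, V, C) = σ² · f(PV/(σ²C)) for all σ², P, V, C > 0. -/
/-!
Each scaling can be used to set one of the variables to `1`: time scaling by `λ = σ²`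
normalises `σ²` and pulls out the factor `σ²`, money scaling by `λ = 1/C` normalises `C`,
and share scaling by `λ = 1/P` normalises `P`. What is left is `g` evaluated at
`(1, 1, PV/(σ²C), 1)`, so `f t := g(1, 1, t, 1)` works.
-/

section DimensionalScaling

variable {g : ℝ → ℝ → ℝ → ℝ → ℝ} {s P V C : ℝ}

lemma eq_mul_normalize_time
    (htime : ∀ s P V C lam : ℝ, 0 < s → 0 < P → 0 < V → 0 < C → 0 < lam →
      g (lam * s) P (lam * V) C = lam * g s P V C)
    (hs : 0 < s) (hP : 0 < P) (hV : 0 < V) (hC : 0 < C) :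
    g s P V C = s * g 1 P (V / s) C := by
  simpa [mul_div_cancel₀ V hs.ne'] using
    htime 1 P (V / s) C s one_pos hP (div_pos hV hs) hC hs

lemma eq_normalize_money
    (hmoney : ∀ s P V C lam : ℝ, 0 < s → 0 < P → 0 < V → 0 < C → 0 < lam →
      g s (lam * P) V (lam * C) = g s P V C)
    (hs : 0 < s) (hP : 0 < P) (hV : 0 < V) (hC : 0 < C) :
    g s P V C = g s (P / C) V 1 := by
  simpa [mul_div_cancel₀ P hC.ne'] using
    hmoney s (P / C) V 1 C hs (div_pos hP hC) hV one_pos hC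

lemma eq_normalize_shares
    (hshares : ∀ s P V C lam : ℝ, 0 < s → 0 < P → 0 < V → 0 < C → 0 < lam →
      g s (lam * P) (V / lam) C = g s P V C)
    (hs : 0 < s) (hP : 0 < P) (hV : 0 < V) (hC : 0 < C) :
    g s P V C = g s 1 (P * V) C := by
  simpa [mul_div_cancel_left₀ V hP.ne'] using
    hshares s 1 (P * V) C P hs one_pos (mul_pos hP hV) hC hP

end DimensionalScaling

/-- If the number of trades `N = g(σ², P, V, C)` is a dimensionally invariant
positive function, then `g(σ², P, V, C) = σ² · f(PV/(σ²C))` for some positive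
function `f`. -/
theorem trading_activity_general_form
    (g : ℝ → ℝ → ℝ → ℝ → ℝ)
    (hpos : ∀ s P V C : ℝ, 0 < s → 0 < P → 0 < V → 0 < C → 0 < g s P V C)
    (hshares : ∀ s P V C lam : ℝ, 0 < s → 0 < P → 0 < V → 0 < C → 0 < lam →
      g s (lam * P) (V / lam) C = g s P V C)
    (hmoney : ∀ s P V C lam : ℝ, 0 < s → 0 < P → 0 < V → 0 < C → 0 < lam →
      g s (lam * P) V (lam * C) = g s P V C)
    (htime : ∀ s P V C lam : ℝ, 0 < s → 0 < P → 0 < V → 0 < C → 0 < lam →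
      g (lam * s) P (lam * V) C = lam * g s P V C) :
    ∃ f : ℝ → ℝ, (∀ t : ℝ, 0 < t → 0 < f t) ∧
      ∀ s P V C : ℝ, 0 < s → 0 < P → 0 < V → 0 < C →
        g s P V C = s * f (P * V / (s * C)) := by
  refine ⟨fun t ↦ g 1 1 t 1, fun t ht ↦ hpos 1 1 t 1 one_pos one_pos ht one_pos, ?_⟩
  intro s P V C hs hP hV hC
  calc g s P V C = s * g 1 P (V / s) C := eq_mul_normalize_time htime hs hP hV hC
    _ = s * g 1 (P / C) (V / s) 1 := by
      rw [eq_normalize_money hmoney one_pos hP (div_pos hV hs) hC]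
    _ = s * g 1 1 (P / C * (V / s)) 1 := by
      rw [eq_normalize_shares hshares one_pos (div_pos hP hC) (div_pos hV hs) one_pos]
    _ = s * g 1 1 (P * V / (s * C)) 1 := by
      rw [div_mul_div_comm, mul_comm C s]
end

section
/- (3/2-law) Let g : (0,∞)⁴ → (0,∞) be a function of (σ², P, V, C) satisfying for all positive arguments and all λ > 0: (shares scaling) g(σ², λP, V/λ, C) = g(σ², P, V, C); (money scaling) g(σ², λP, V, λC) = g(σ², P, V, C); (time scaling) g(λσ², P, λV, C) = λ·g(σ², P, V, C); (leverage neutrality) g(λ²σ², P/λ, V, C) = g(σ², P, V, C). Then there exists a constant c > 0 such that g(σ², P, V, C) = c · (σ²)^(1/3) · P^(2/3) · V^(2/3) · C^(−2/3) for all positive arguments; equivalently, the number of trades N = g(σ², P, V, C) satisfies N^(3/2) = c^(3/2) · √(σ²) · P · V / C. -/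
/-!
Share and money rescalings reduce `g` to `h(σ², w) = g(σ², 1, w, 1)` evaluated at
`w = P V / C`, the combination of `P, V, C` invariant under both. Time scaling makes `h`
homogeneous of degree one, and leverage neutrality gives `h(λ² σ², w / λ) = h(σ², w)`.
Writing `σ² = a³`, `w = b³` and taking `λ = b / a` moves both arguments to `a b²`, so
`h(a³, b³) = a b² · h(1, 1)`, i.e. `h(σ², w) = h(1, 1) (σ²)^(1/3) w^(2/3)`.
-/

open Real

section Homogeneous

variable {h : ℝ → ℝ → ℝ}

lemma apply_pow_three_eq_mul
    (htime : ∀ s v lam : ℝ, 0 < s → 0 < v → 0 < lam → h (lam * s) (lam * v) = lam * h s v)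
    (hleverage : ∀ s v lam : ℝ, 0 < s → 0 < v → 0 < lam → h (lam ^ 2 * s) (v / lam) = h s v)
    {a b : ℝ} (ha : 0 < a) (hb : 0 < b) :
    h (a ^ 3) (b ^ 3) = a * b ^ 2 * h 1 1 := by
  have hsigma : (b / a) ^ 2 * a ^ 3 = a * b ^ 2 := by field_simp
  have hw : b ^ 3 / (b / a) = a * b ^ 2 := by field_simp
  calc h (a ^ 3) (b ^ 3) = h ((b / a) ^ 2 * a ^ 3) (b ^ 3 / (b / a)) :=
        (hleverage _ _ _ (by positivity) (by positivity) (by positivity)).symm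
    _ = h (a * b ^ 2 * 1) (a * b ^ 2 * 1) := by rw [hsigma, hw, mul_one]
    _ = a * b ^ 2 * h 1 1 := htime 1 1 _ one_pos one_pos (by positivity)

lemma apply_eq_mul_rpow
    (htime : ∀ s v lam : ℝ, 0 < s → 0 < v → 0 < lam → h (lam * s) (lam * v) = lam * h s v)
    (hleverage : ∀ s v lam : ℝ, 0 < s → 0 < v → 0 < lam → h (lam ^ 2 * s) (v / lam) = h s v)
    {s v : ℝ} (hs : 0 < s) (hv : 0 < v) :
    h s v = h 1 1 * s ^ ((1 : ℝ) / 3) * v ^ ((2 : ℝ) / 3) := by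
  have hcube : ∀ x : ℝ, 0 < x → (x ^ ((1 : ℝ) / 3)) ^ 3 = x := fun x hx => by
    simpa using rpow_inv_natCast_pow hx.le (n := 3) three_ne_zero
  have hsq : (v ^ ((1 : ℝ) / 3)) ^ 2 = v ^ ((2 : ℝ) / 3) := by
    rw [← rpow_natCast, ← rpow_mul hv.le]
    norm_num
  calc h s v = h ((s ^ ((1 : ℝ) / 3)) ^ 3) ((v ^ ((1 : ℝ) / 3)) ^ 3) := by
        rw [hcube s hs, hcube v hv]
    _ = h 1 1 * s ^ ((1 : ℝ) / 3) * v ^ ((2 : ℝ) / 3) := by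
        rw [apply_pow_three_eq_mul htime hleverage (by positivity) (by positivity), hsq]
        ring

end Homogeneous

lemma apply_eq_apply_one_mul_div_one {g : ℝ → ℝ → ℝ → ℝ → ℝ}
    (hshares : ∀ s P V C lam : ℝ, 0 < s → 0 < P → 0 < V → 0 < C → 0 < lam →
      g s (lam * P) (V / lam) C = g s P V C)
    (hmoney : ∀ s P V C lam : ℝ, 0 < s → 0 < P → 0 < V → 0 < C → 0 < lam →
      g s (lam * P) V (lam * C) = g s P V C)
    {s P V C : ℝ} (hs : 0 < s) (hP : 0 < P) (hV : 0 < V) (hC : 0 < C) :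
    g s P V C = g s 1 (P * V / C) 1 := by
  calc g s P V C = g s (C * (P / C)) V (C * 1) := by field_simp
    _ = g s (P / C) V 1 := hmoney s _ V 1 C hs (by positivity) hV one_pos hC
    _ = g s (C / P * (P / C)) (V / (C / P)) 1 :=
        (hshares s _ V 1 (C / P) hs (by positivity) hV one_pos (by positivity)).symm
    _ = g s 1 (P * V / C) 1 := by field_simp

lemma rpow_two_thirds_div {P V C : ℝ} (hP : 0 < P) (hV : 0 < V) (hC : 0 < C) :
    (P * V / C) ^ ((2 : ℝ) / 3) = P ^ ((2 : ℝ) / 3) * V ^ ((2 : ℝ) / 3) * C ^ (-(2 : ℝ) / 3) := by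
  rw [div_rpow (by positivity) hC.le, mul_rpow hP.le hV.le, neg_div, rpow_neg hC.le,
    div_eq_mul_inv]

lemma mul_rpow_thirds_rpow_three_halves {c s w : ℝ} (hc : 0 < c) (hs : 0 < s) (hw : 0 < w) :
    (c * s ^ ((1 : ℝ) / 3) * w ^ ((2 : ℝ) / 3)) ^ ((3 : ℝ) / 2) = c ^ ((3 : ℝ) / 2) * √s * w := by
  rw [mul_rpow (by positivity) (by positivity), mul_rpow hc.le (by positivity),
    ← rpow_mul hs.le, ← rpow_mul hw.le, sqrt_eq_rpow]
  norm_num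

/-- The 3/2-law: if the number of trades `N = g(σ², P, V, C)` is a dimensionally
invariant and leverage neutral positive function, then
`g(σ², P, V, C) = c · (σ²)^(1/3) · P^(2/3) · V^(2/3) · C^(−2/3)`; equivalently
`N^(3/2) = c^(3/2) · √(σ²) · P · V / C`. -/
theorem three_halves_law
    (g : ℝ → ℝ → ℝ → ℝ → ℝ)
    (hpos : ∀ s P V C : ℝ, 0 < s → 0 < P → 0 < V → 0 < C → 0 < g s P V C)
    (hshares : ∀ s P V C lam : ℝ, 0 < s → 0 < P → 0 < V → 0 < C → 0 < lam →
      g s (lam * P) (V / lam) C = g s P V C)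
    (hmoney : ∀ s P V C lam : ℝ, 0 < s → 0 < P → 0 < V → 0 < C → 0 < lam →
      g s (lam * P) V (lam * C) = g s P V C)
    (htime : ∀ s P V C lam : ℝ, 0 < s → 0 < P → 0 < V → 0 < C → 0 < lam →
      g (lam * s) P (lam * V) C = lam * g s P V C)
    (hleverage : ∀ s P V C lam : ℝ, 0 < s → 0 < P → 0 < V → 0 < C → 0 < lam →
      g (lam ^ 2 * s) (P / lam) V C = g s P V C) :
    ∃ c : ℝ, 0 < c ∧ ∀ s P V C : ℝ, 0 < s → 0 < P → 0 < V → 0 < C →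
      g s P V C
        = c * s ^ ((1 : ℝ) / 3) * P ^ ((2 : ℝ) / 3) * V ^ ((2 : ℝ) / 3)
            * C ^ (-(2 : ℝ) / 3)
      ∧ (g s P V C) ^ ((3 : ℝ) / 2)
          = c ^ ((3 : ℝ) / 2) * Real.sqrt s * P * V / C := by
  have hreduce := @apply_eq_apply_one_mul_div_one g hshares hmoney
  have hlaw : ∀ s w : ℝ, 0 < s → 0 < w →
      g s 1 w 1 = g 1 1 1 1 * s ^ ((1 : ℝ) / 3) * w ^ ((2 : ℝ) / 3) := by
    refine fun s w hs hw => apply_eq_mul_rpow (h := fun s w => g s 1 w 1)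
      (fun s v lam hs hv hlam => htime s 1 v 1 lam hs one_pos hv one_pos hlam)
      (fun s v lam hs hv hlam => ?_) hs hw
    rw [← hleverage s 1 v 1 lam hs one_pos hv one_pos hlam,
      hreduce (by positivity) (by positivity) hv one_pos]
    simp only [one_div_mul_eq_div, div_one]
  refine ⟨g 1 1 1 1, hpos 1 1 1 1 one_pos one_pos one_pos one_pos,
    fun s P V C hs hP hV hC => ?_⟩
  have hw : 0 < P * V / C := by positivity
  rw [hreduce hs hP hV hC, hlaw s _ hs hw,
    mul_rpow_thirds_rpow_three_halves (hpos 1 1 1 1 one_pos one_pos one_pos one_pos) hs hw,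
    rpow_two_thirds_div hP hV hC]
  constructor <;> ring
end

section
/- Let g : (0,∞)³ → (0,∞) be a function of (σ_B², V, C) satisfying for all positive arguments and all λ > 0: (shares scaling) g(λ²σ_B², V/λ, C) = g(σ_B², V, C); (money scaling) g(λ²σ_B², V, λC) = g(σ_B², V, C); (time scaling) g(λσ_B², λV, C) = λ·g(σ_B², V, C). Then there exists a constant c > 0 such that g(σ_B², V, C) = c · (σ_B²)^(1/3) · V^(2/3) · C^(−2/3) for all positive arguments; equivalently, the number of trades N = g(σ_B², V, C) satisfies N^(3/2) = c^(3/2) · √(σ_B²) · V / C. -/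
/-!
Money scaling with `λ = C` and share scaling with `λ = V` reduce `g sB V C` to the one-variable
profile `f x = g x 1 1` at `x = V² sB / C²`. Time scaling followed by share scaling gives
`f (λ³ x) = λ f x`, so `f x = f 1 · x^(1/3)`; both forms of the law are then rpow algebra.
-/

open Real

lemma apply_eq_apply_one_mul_rpow_one_third {f : ℝ → ℝ}
    (hf : ∀ x lam : ℝ, 0 < x → 0 < lam → f (lam ^ 3 * x) = lam * f x) {t : ℝ} (ht : 0 < t) :
    f t = f 1 * t ^ ((1 : ℝ) / 3) := by
  have hcube : (t ^ ((1 : ℝ) / 3)) ^ 3 = t := by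
    rw [← rpow_natCast, ← rpow_mul ht.le]; norm_num
  have := hf 1 (t ^ ((1 : ℝ) / 3)) one_pos (by positivity)
  rwa [mul_one, hcube, mul_comm] at this

lemma mul_rpow_one_third_rpow_three_halves {c x : ℝ} (hc : 0 ≤ c) (hx : 0 ≤ x) :
    (c * x ^ ((1 : ℝ) / 3)) ^ ((3 : ℝ) / 2) = c ^ ((3 : ℝ) / 2) * √x := by
  rw [mul_rpow hc (by positivity), ← rpow_mul hx, sqrt_eq_rpow]; norm_num

lemma sq_mul_div_sq_rpow_one_third {s V C : ℝ} (hs : 0 ≤ s) (hV : 0 ≤ V) (hC : 0 < C) :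
    (V ^ 2 * (s / C ^ 2)) ^ ((1 : ℝ) / 3)
      = s ^ ((1 : ℝ) / 3) * V ^ ((2 : ℝ) / 3) * C ^ (-(2 : ℝ) / 3) := by
  rw [mul_rpow (by positivity) (by positivity), div_rpow hs (by positivity),
    ← rpow_natCast V, ← rpow_natCast C, ← rpow_mul hV, ← rpow_mul hC.le,
    div_eq_mul_inv _ (C ^ _), ← rpow_neg hC.le]
  norm_num; ring

lemma sqrt_sq_mul_div_sq {s V C : ℝ} (hV : 0 ≤ V) (hC : 0 ≤ C) :
    √(V ^ 2 * (s / C ^ 2)) = √s * V / C := by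
  rw [sqrt_mul (by positivity), sqrt_div' _ (by positivity), sqrt_sq hV, sqrt_sq hC]; ring

section DimensionalInvariance

variable {g : ℝ → ℝ → ℝ → ℝ}

lemma apply_eq_apply_div_sq_one_of_money
    (hmoney : ∀ sB V C lam : ℝ, 0 < sB → 0 < V → 0 < C → 0 < lam →
      g (lam ^ 2 * sB) V (lam * C) = g sB V C)
    {sB V C : ℝ} (hsB : 0 < sB) (hV : 0 < V) (hC : 0 < C) :
    g sB V C = g (sB / C ^ 2) V 1 := by
  have := hmoney (sB / C ^ 2) V 1 C (by positivity) hV one_pos hC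
  rwa [mul_div_cancel₀ _ (by positivity), mul_one] at this

lemma apply_eq_apply_sq_mul_one_of_shares
    (hshares : ∀ sB V C lam : ℝ, 0 < sB → 0 < V → 0 < C → 0 < lam →
      g (lam ^ 2 * sB) (V / lam) C = g sB V C)
    {sB V C : ℝ} (hsB : 0 < sB) (hV : 0 < V) (hC : 0 < C) :
    g sB V C = g (V ^ 2 * sB) 1 C := by
  rw [← hshares sB V C V hsB hV hC hV, div_self hV.ne']

lemma apply_pow_three_mul_one
    (hshares : ∀ sB V C lam : ℝ, 0 < sB → 0 < V → 0 < C → 0 < lam →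
      g (lam ^ 2 * sB) (V / lam) C = g sB V C)
    (htime : ∀ sB V C lam : ℝ, 0 < sB → 0 < V → 0 < C → 0 < lam →
      g (lam * sB) (lam * V) C = lam * g sB V C)
    {x lam C : ℝ} (hx : 0 < x) (hlam : 0 < lam) (hC : 0 < C) :
    g (lam ^ 3 * x) 1 C = lam * g x 1 C := by
  have := htime x 1 C lam hx one_pos hC hlam
  rw [mul_one, apply_eq_apply_sq_mul_one_of_shares hshares (by positivity) hlam hC] at this
  rwa [← mul_assoc, ← pow_succ] at this

end DimensionalInvariance

/-- Bachelier-volatility version of the 3/2-law: if the number of trades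
`N = g(σ_B², V, C)` is a dimensionally invariant positive function, then
`g(σ_B², V, C) = c · (σ_B²)^(1/3) · V^(2/3) · C^(−2/3)`; equivalently
`N^(3/2) = c^(3/2) · √(σ_B²) · V / C`. -/
theorem three_halves_law_Bachelier
    (g : ℝ → ℝ → ℝ → ℝ)
    (hpos : ∀ sB V C : ℝ, 0 < sB → 0 < V → 0 < C → 0 < g sB V C)
    (hshares : ∀ sB V C lam : ℝ, 0 < sB → 0 < V → 0 < C → 0 < lam →
      g (lam ^ 2 * sB) (V / lam) C = g sB V C)
    (hmoney : ∀ sB V C lam : ℝ, 0 < sB → 0 < V → 0 < C → 0 < lam →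
      g (lam ^ 2 * sB) V (lam * C) = g sB V C)
    (htime : ∀ sB V C lam : ℝ, 0 < sB → 0 < V → 0 < C → 0 < lam →
      g (lam * sB) (lam * V) C = lam * g sB V C) :
    ∃ c : ℝ, 0 < c ∧ ∀ sB V C : ℝ, 0 < sB → 0 < V → 0 < C →
      g sB V C = c * sB ^ ((1 : ℝ) / 3) * V ^ ((2 : ℝ) / 3) * C ^ (-(2 : ℝ) / 3)
      ∧ (g sB V C) ^ ((3 : ℝ) / 2)
          = c ^ ((3 : ℝ) / 2) * Real.sqrt sB * V / C := by
  have hc : 0 < g 1 1 1 := hpos 1 1 1 one_pos one_pos one_pos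
  refine ⟨g 1 1 1, hc, fun sB V C hsB hV hC => ?_⟩
  have hreduce : g sB V C = g 1 1 1 * (V ^ 2 * (sB / C ^ 2)) ^ ((1 : ℝ) / 3) := by
    rw [apply_eq_apply_div_sq_one_of_money hmoney hsB hV hC,
      apply_eq_apply_sq_mul_one_of_shares hshares (by positivity) hV one_pos]
    exact apply_eq_apply_one_mul_rpow_one_third (f := fun x => g x 1 1)
      (fun x lam hx hlam => apply_pow_three_mul_one hshares htime hx hlam one_pos) (by positivity)
  constructor
  · rw [hreduce, sq_mul_div_sq_rpow_one_third hsB.le hV.le hC]; ring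
  · rw [hreduce, mul_rpow_one_third_rpow_three_halves hc.le (by positivity),
      sqrt_sq_mul_div_sq hV.le hC.le]; ring
end

section
/- Let g : (0,∞)³ → (0,∞) be a function of (σ_B², V, S) satisfying for all positive arguments and all λ > 0: (shares scaling) g(λ²σ_B², V/λ, λS) = g(σ_B², V, S); (money scaling) g(λ²σ_B², V, λS) = g(σ_B², V, S); (time scaling) g(λσ_B², λV, S) = λ·g(σ_B², V, S). Then there exists a constant c > 0 such that g(σ_B², V, S) = c² · σ_B²/S² for all positive arguments. -/
/-!
Comparing the shares scaling with the money scaling shows that `g` does not depend on the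
volume. Time scaling then makes `g` linear in `σ_B²`, and money scaling fixes the dependence
on the spread as `S⁻²`, so `g(σ_B², V, S) = g(1, 1, 1) · σ_B² / S²`.
-/

section DimensionalInvariance

variable {g : ℝ → ℝ → ℝ → ℝ}

theorem apply_eq_of_volume_eq
    (hshares : ∀ sB V S lam : ℝ, 0 < sB → 0 < V → 0 < S → 0 < lam →
      g (lam ^ 2 * sB) (V / lam) (lam * S) = g sB V S)
    (hmoney : ∀ sB V S lam : ℝ, 0 < sB → 0 < V → 0 < S → 0 < lam →
      g (lam ^ 2 * sB) V (lam * S) = g sB V S)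
    {sB V W S : ℝ} (hsB : 0 < sB) (hV : 0 < V) (hW : 0 < W) (hS : 0 < S) :
    g sB V S = g sB W S := by
  set lam := V / W
  have hlam : 0 < lam := div_pos hV hW
  have hsB' : 0 < sB / lam ^ 2 := by positivity
  have hS' : 0 < S / lam := by positivity
  have hsB_eq : lam ^ 2 * (sB / lam ^ 2) = sB := by field_simp
  have hS_eq : lam * (S / lam) = S := by field_simp
  have hV_eq : V / lam = W := div_div_cancel₀ hV.ne'
  have hshift := hshares _ V _ lam hsB' hV hS' hlam
  have hfix := hmoney _ V _ lam hsB' hV hS' hlam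
  rw [hsB_eq, hS_eq, hV_eq] at hshift
  rw [hsB_eq, hS_eq] at hfix
  rw [hfix, hshift]

theorem apply_eq_mul_apply_one_one
    (hvol : ∀ sB V W S : ℝ, 0 < sB → 0 < V → 0 < W → 0 < S → g sB V S = g sB W S)
    (htime : ∀ sB V S lam : ℝ, 0 < sB → 0 < V → 0 < S → 0 < lam →
      g (lam * sB) (lam * V) S = lam * g sB V S)
    {sB V S : ℝ} (hsB : 0 < sB) (hV : 0 < V) (hS : 0 < S) :
    g sB V S = sB * g 1 1 S := by
  rw [hvol sB V sB S hsB hV hsB hS, ← htime 1 1 S sB one_pos one_pos hS hsB, mul_one]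

theorem sq_mul_apply_one_one
    (hlin : ∀ sB V S : ℝ, 0 < sB → 0 < V → 0 < S → g sB V S = sB * g 1 1 S)
    (hmoney : ∀ sB V S lam : ℝ, 0 < sB → 0 < V → 0 < S → 0 < lam →
      g (lam ^ 2 * sB) V (lam * S) = g sB V S)
    {S : ℝ} (hS : 0 < S) :
    S ^ 2 * g 1 1 S = g 1 1 1 := by
  have hscale := hmoney 1 1 1 S one_pos one_pos one_pos hS
  rw [mul_one, mul_one] at hscale
  rw [← hscale, hlin (S ^ 2) 1 S (by positivity) one_pos hS]

end DimensionalInvariance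

/-- Wyart et al. relation: if the number of trades `N = g(σ_B², V, S)` is a
dimensionally invariant positive function of the squared Bachelier volatility,
the volume and the bid-ask spread, then `g(σ_B², V, S) = c² · σ_B² / S²`. -/
theorem wyart_relation
    (g : ℝ → ℝ → ℝ → ℝ)
    (hpos : ∀ sB V S : ℝ, 0 < sB → 0 < V → 0 < S → 0 < g sB V S)
    (hshares : ∀ sB V S lam : ℝ, 0 < sB → 0 < V → 0 < S → 0 < lam →
      g (lam ^ 2 * sB) (V / lam) (lam * S) = g sB V S)
    (hmoney : ∀ sB V S lam : ℝ, 0 < sB → 0 < V → 0 < S → 0 < lam →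
      g (lam ^ 2 * sB) V (lam * S) = g sB V S)
    (htime : ∀ sB V S lam : ℝ, 0 < sB → 0 < V → 0 < S → 0 < lam →
      g (lam * sB) (lam * V) S = lam * g sB V S) :
    ∃ c : ℝ, 0 < c ∧ ∀ sB V S : ℝ, 0 < sB → 0 < V → 0 < S →
      g sB V S = c ^ 2 * sB / S ^ 2 := by
  have hvol : ∀ sB V W S : ℝ, 0 < sB → 0 < V → 0 < W → 0 < S → g sB V S = g sB W S :=
    fun _ _ _ _ => apply_eq_of_volume_eq hshares hmoney
  have hlin : ∀ sB V S : ℝ, 0 < sB → 0 < V → 0 < S → g sB V S = sB * g 1 1 S :=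
    fun _ _ _ => apply_eq_mul_apply_one_one hvol htime
  have h111 : 0 < g 1 1 1 := hpos 1 1 1 one_pos one_pos one_pos
  refine ⟨√(g 1 1 1), Real.sqrt_pos.mpr h111, fun sB V S hsB hV hS => ?_⟩
  rw [Real.sq_sqrt h111.le, hlin sB V S hsB hV hS, ← sq_mul_apply_one_one hlin hmoney hS]
  field_simp
end

section
/- ((1+H)-law) Fix H ∈ (0,1). Let g : (0,∞)⁴ → (0,∞) be a function of (σ̂², P, V, C) satisfying for all positive arguments and all λ > 0: (shares scaling) g(σ̂², λP, V/λ, C) = g(σ̂², P, V, C); (money scaling) g(σ̂², λP, V, λC) = g(σ̂², P, V, C); (time scaling) g(λ^(2H)·σ̂², P, λV, C) = λ·g(σ̂², P, V, C); (leverage neutrality) g(λ²σ̂², P/λ, V, C) = g(σ̂², P, V, C). Then there exists a constant c > 0 such that g(σ̂², P, V, C) = c · (σ̂²)^(1/(2(1+H))) · (PV/C)^(1/(1+H)) for all positive arguments; equivalently, N = g(σ̂², P, V, C) satisfies N^(1+H) = c^(1+H) · √(σ̂²) · P · V / C. -/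
/-!
Shares, money and leverage scaling leave `g` unchanged while moving any point `(s, P, V, C)`
to `(Q² s, 1, 1, 1)` with `Q = P V / C`, so `g` depends on `Q² s` alone. Along that one remaining
direction, time scaling by `λ` (undone in `P` and `V` by shares and leverage scaling) multiplies
`Q² s` by `λ^(2(1+H))` and `g` by `λ`, which forces `g = c (Q² s)^(1/(2(1+H)))`.
-/

open Real

section

variable {g : ℝ → ℝ → ℝ → ℝ → ℝ}

theorem apply_eq_apply_sq_mul_one_one_one
    (hshares : ∀ s P V C lam : ℝ, 0 < s → 0 < P → 0 < V → 0 < C → 0 < lam →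
      g s (lam * P) (V / lam) C = g s P V C)
    (hmoney : ∀ s P V C lam : ℝ, 0 < s → 0 < P → 0 < V → 0 < C → 0 < lam →
      g s (lam * P) V (lam * C) = g s P V C)
    (hleverage : ∀ s P V C lam : ℝ, 0 < s → 0 < P → 0 < V → 0 < C → 0 < lam →
      g (lam ^ 2 * s) (P / lam) V C = g s P V C)
    {s P V C : ℝ} (hs : 0 < s) (hP : 0 < P) (hV : 0 < V) (hC : 0 < C) :
    g s P V C = g ((P * V / C) ^ 2 * s) 1 1 1 := by
  have hQ : 0 < P * V / C := by positivity
  calc g s P V C = g s (C⁻¹ * P) V (C⁻¹ * C) :=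
        (hmoney s P V C C⁻¹ hs hP hV hC (inv_pos.2 hC)).symm
    _ = g s (C⁻¹ * P) V 1 := by rw [inv_mul_cancel₀ hC.ne']
    _ = g s (V * (C⁻¹ * P)) (V / V) 1 :=
        (hshares s (C⁻¹ * P) V 1 V hs (by positivity) hV one_pos hV).symm
    _ = g s (P * V / C) 1 1 := by rw [div_self hV.ne', show V * (C⁻¹ * P) = P * V / C by ring]
    _ = g ((P * V / C) ^ 2 * s) ((P * V / C) / (P * V / C)) 1 1 :=
        (hleverage s (P * V / C) 1 1 (P * V / C) hs hQ one_pos one_pos hQ).symm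
    _ = g ((P * V / C) ^ 2 * s) 1 1 1 := by rw [div_self hQ.ne']

theorem apply_rpow_one_one_one (H : ℝ)
    (hshares : ∀ s P V C lam : ℝ, 0 < s → 0 < P → 0 < V → 0 < C → 0 < lam →
      g s (lam * P) (V / lam) C = g s P V C)
    (htime : ∀ s P V C lam : ℝ, 0 < s → 0 < P → 0 < V → 0 < C → 0 < lam →
      g (lam ^ (2 * H) * s) P (lam * V) C = lam * g s P V C)
    (hleverage : ∀ s P V C lam : ℝ, 0 < s → 0 < P → 0 < V → 0 < C → 0 < lam →
      g (lam ^ 2 * s) (P / lam) V C = g s P V C)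
    {lam : ℝ} (hlam : 0 < lam) :
    g (lam ^ (2 * (1 + H))) 1 1 1 = lam * g 1 1 1 1 := by
  have hl2H : 0 < lam ^ (2 * H) := rpow_pos_of_pos hlam _
  calc g (lam ^ (2 * (1 + H))) 1 1 1 = g (lam ^ 2 * lam ^ (2 * H)) (lam / lam) 1 1 := by
        rw [div_self hlam.ne', mul_add, mul_one, rpow_add hlam, rpow_two]
    _ = g (lam ^ (2 * H)) lam 1 1 := hleverage _ lam 1 1 lam hl2H hlam one_pos one_pos hlam
    _ = g (lam ^ (2 * H)) (lam * 1) (lam / lam) 1 := by rw [mul_one, div_self hlam.ne']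
    _ = g (lam ^ (2 * H)) 1 lam 1 := hshares _ 1 lam 1 lam hl2H one_pos hlam one_pos hlam
    _ = g (lam ^ (2 * H) * 1) 1 (lam * 1) 1 := by rw [mul_one, mul_one]
    _ = lam * g 1 1 1 1 := htime 1 1 1 1 lam one_pos one_pos one_pos one_pos hlam

theorem apply_one_one_one_eq_mul_rpow {H : ℝ} (hH : 1 + H ≠ 0)
    (hshares : ∀ s P V C lam : ℝ, 0 < s → 0 < P → 0 < V → 0 < C → 0 < lam →
      g s (lam * P) (V / lam) C = g s P V C)
    (htime : ∀ s P V C lam : ℝ, 0 < s → 0 < P → 0 < V → 0 < C → 0 < lam →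
      g (lam ^ (2 * H) * s) P (lam * V) C = lam * g s P V C)
    (hleverage : ∀ s P V C lam : ℝ, 0 < s → 0 < P → 0 < V → 0 < C → 0 < lam →
      g (lam ^ 2 * s) (P / lam) V C = g s P V C)
    {t : ℝ} (ht : 0 < t) :
    g t 1 1 1 = g 1 1 1 1 * t ^ (1 / (2 * (1 + H))) := by
  have h := apply_rpow_one_one_one H hshares htime hleverage
    (rpow_pos_of_pos ht (1 / (2 * (1 + H))))
  rwa [← rpow_mul ht.le, one_div_mul_cancel (mul_ne_zero two_ne_zero hH), rpow_one,
    mul_comm] at h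

end

theorem sq_mul_rpow_one_div_two_mul {Q s : ℝ} (hQ : 0 ≤ Q) (hs : 0 ≤ s) (a : ℝ) :
    (Q ^ 2 * s) ^ (1 / (2 * a)) = s ^ (1 / (2 * a)) * Q ^ (1 / a) := by
  rw [mul_rpow (pow_nonneg hQ 2) hs, ← rpow_natCast, ← rpow_mul hQ, mul_comm]
  congr 2
  by_cases ha : a = 0
  · simp [ha]
  · push_cast
    field_simp

theorem mul_rpow_one_div_two_mul_mul_rpow_one_div_rpow {c s Q a : ℝ}
    (hc : 0 ≤ c) (hs : 0 ≤ s) (hQ : 0 ≤ Q) (ha : a ≠ 0) :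
    (c * s ^ (1 / (2 * a)) * Q ^ (1 / a)) ^ a = c ^ a * √s * Q := by
  rw [mul_rpow (by positivity) (by positivity), mul_rpow hc (by positivity),
    ← rpow_mul hs, ← rpow_mul hQ, sqrt_eq_rpow]
  field_simp
  rw [rpow_one]

/-- The (1+H)-law: under the H-Assumption `[σ̂²] = T^(−2H)`, dimensional
invariance and leverage neutrality, the number of trades satisfies
`g(σ̂², P, V, C) = c · (σ̂²)^(1/(2(1+H))) · (PV/C)^(1/(1+H))`; equivalently
`N^(1+H) = c^(1+H) · √(σ̂²) · P · V / C`. -/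
theorem one_plus_H_law
    (H : ℝ) (hH : H ∈ Set.Ioo (0 : ℝ) 1)
    (g : ℝ → ℝ → ℝ → ℝ → ℝ)
    (hpos : ∀ s P V C : ℝ, 0 < s → 0 < P → 0 < V → 0 < C → 0 < g s P V C)
    (hshares : ∀ s P V C lam : ℝ, 0 < s → 0 < P → 0 < V → 0 < C → 0 < lam →
      g s (lam * P) (V / lam) C = g s P V C)
    (hmoney : ∀ s P V C lam : ℝ, 0 < s → 0 < P → 0 < V → 0 < C → 0 < lam →
      g s (lam * P) V (lam * C) = g s P V C)
    (htime : ∀ s P V C lam : ℝ, 0 < s → 0 < P → 0 < V → 0 < C → 0 < lam →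
      g (lam ^ (2 * H) * s) P (lam * V) C = lam * g s P V C)
    (hleverage : ∀ s P V C lam : ℝ, 0 < s → 0 < P → 0 < V → 0 < C → 0 < lam →
      g (lam ^ 2 * s) (P / lam) V C = g s P V C) :
    ∃ c : ℝ, 0 < c ∧ ∀ s P V C : ℝ, 0 < s → 0 < P → 0 < V → 0 < C →
      g s P V C = c * s ^ (1 / (2 * (1 + H))) * (P * V / C) ^ (1 / (1 + H))
      ∧ (g s P V C) ^ (1 + H) = c ^ (1 + H) * Real.sqrt s * P * V / C := by
  have h1H : 1 + H ≠ 0 := by linarith [hH.1]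
  have hc : 0 < g 1 1 1 1 := hpos 1 1 1 1 one_pos one_pos one_pos one_pos
  refine ⟨g 1 1 1 1, hc, fun s P V C hs hP hV hC => ?_⟩
  have hQ : 0 ≤ P * V / C := by positivity
  have hlaw :
      g s P V C = g 1 1 1 1 * s ^ (1 / (2 * (1 + H))) * (P * V / C) ^ (1 / (1 + H)) := by
    rw [apply_eq_apply_sq_mul_one_one_one hshares hmoney hleverage hs hP hV hC,
      apply_one_one_one_eq_mul_rpow h1H hshares htime hleverage (by positivity),
      sq_mul_rpow_one_div_two_mul hQ hs.le, mul_assoc]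
  refine ⟨hlaw, ?_⟩
  rw [hlaw, mul_rpow_one_div_two_mul_mul_rpow_one_div_rpow hc.le hs.le hQ h1H]
  ring
end

section
/- (Pi-Theorem) Let m, n, k be natural numbers, B an m×n real matrix with rank(B) = n − k, and a ∈ ℝᵐ. Let h be a real-valued function on n-tuples of positive reals taking positive values, satisfying for every row index j ∈ {1,…,m}, every λ > 0 and every positive W = (W₁,…,Wₙ): h(λ^(B_{j1})·W₁, …, λ^(B_{jn})·Wₙ) = λ^(a_j) · h(W₁,…,Wₙ). Let x⁽¹⁾,…,x⁽ᵏ⁾ ∈ ℝⁿ be a basis of the kernel of B (viewed as a linear map ℝⁿ → ℝᵐ) and let y ∈ ℝⁿ satisfy B·y = a. Then there exists a function f : (0,∞)ᵏ → (0,∞) such that for all positive W: h(W₁,…,Wₙ) · ∏_{i=1}^{n} Wᵢ^(−yᵢ) = f(π₁,…,π_k), where π_l = ∏_{i=1}^{n} Wᵢ^(x⁽ˡ⁾ᵢ) for l = 1,…,k. -/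
/-- The Pi-Theorem of dimensional analysis. -/
theorem pi_theorem
    (m n k : ℕ) (hk : k ≤ n)
    (B : Matrix (Fin m) (Fin n) ℝ) (a : Fin m → ℝ)
    (hrank : B.rank = n - k)
    (h : (Fin n → ℝ) → ℝ)
    (hpos : ∀ W : Fin n → ℝ, (∀ i, 0 < W i) → 0 < h W)
    (hscale : ∀ (j : Fin m) (lam : ℝ) (W : Fin n → ℝ), 0 < lam → (∀ i, 0 < W i) →
      h (fun i => lam ^ (B j i) * W i) = lam ^ (a j) * h W)
    (x : Fin k → Fin n → ℝ)
    (hx_indep : LinearIndependent ℝ x)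
    (hx_ker : ∀ l, B.mulVec (x l) = 0)
    (y : Fin n → ℝ) (hy : B.mulVec y = a) :
    ∃ f : (Fin k → ℝ) → ℝ, (∀ p : Fin k → ℝ, (∀ l, 0 < p l) → 0 < f p) ∧
      ∀ W : Fin n → ℝ, (∀ i, 0 < W i) →
        h W * ∏ i, W i ^ (-y i) = f (fun l => ∏ i, W i ^ (x l i)) := by
  classical
  set X : Matrix (Fin k) (Fin n) ℝ := Matrix.of x with hXdef
  -- rank of X is k
  have hXrank : X.rank = k := by
    have := hx_indep.rank_matrix (M := X)
    simpa using this
  -- finrank of the kernel of X.mulVecLin is n - k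
  have hKer : Module.finrank ℝ (LinearMap.ker X.mulVecLin) = n - k := by
    have h1 := LinearMap.finrank_range_add_finrank_ker X.mulVecLin
    have h2 : Module.finrank ℝ (Fin n → ℝ) = n := (Module.finrank_fin_fun (R := ℝ))
    have h3 : Module.finrank ℝ (LinearMap.range X.mulVecLin) = k := hXrank
    omega
  -- the range of B.transpose.mulVecLin has finrank n - k
  have hSrank : Module.finrank ℝ (LinearMap.range B.transpose.mulVecLin) = n - k := by
    have : B.transpose.rank = n - k := by rw [Matrix.rank_transpose, hrank]
    exact this
  -- the row space of B is contained in the kernel of X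
  have hS_le : LinearMap.range B.transpose.mulVecLin ≤ LinearMap.ker X.mulVecLin := by
    rintro u ⟨μ, rfl⟩
    rw [LinearMap.mem_ker]
    funext l
    have hBxl := congrFun (hx_ker l)
    simp only [Matrix.mulVecLin_apply, Matrix.mulVec, dotProduct,
      Matrix.transpose_apply, Pi.zero_apply] at hBxl ⊢
    calc ∑ i, X l i * ∑ j, B j i * μ j
        = ∑ i, ∑ j, μ j * (B j i * x l i) := by
          apply Finset.sum_congr rfl; intro i _
          rw [Finset.mul_sum]; apply Finset.sum_congr rfl; intro j _
          simp only [hXdef, Matrix.of_apply]; ring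
      _ = ∑ j, μ j * ∑ i, B j i * x l i := by
          rw [Finset.sum_comm]
          apply Finset.sum_congr rfl; intro j _
          rw [Finset.mul_sum]
      _ = 0 := by
          apply Finset.sum_eq_zero; intro j _
          rw [hBxl j, mul_zero]
  have hSK : LinearMap.range B.transpose.mulVecLin = LinearMap.ker X.mulVecLin :=
    Submodule.eq_of_le_of_finrank_eq hS_le (by rw [hSrank, hKer])
  -- X.mulVecLin is surjective
  have hsurjlin : Function.Surjective X.mulVecLin := by
    rw [← LinearMap.range_eq_top]
    apply Submodule.eq_top_of_finrank_eq
    have h3 : Module.finrank ℝ (LinearMap.range X.mulVecLin) = k := hXrank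
    rw [h3, Module.finrank_fin_fun (R := ℝ)]
  -- iterated scaling
  have hscale_sum : ∀ (μ : Fin m → ℝ) (W : Fin n → ℝ), (∀ i, 0 < W i) →
      h (fun i => Real.exp (∑ j, μ j * B j i) * W i)
        = Real.exp (∑ j, μ j * a j) * h W := by
    intro μ W hW
    have key : ∀ s : Finset (Fin m),
        h (fun i => Real.exp (∑ j ∈ s, μ j * B j i) * W i)
          = Real.exp (∑ j ∈ s, μ j * a j) * h W := by
      intro s
      induction s using Finset.induction with
      | empty => simp
      | @insert j s hj ih =>
        have hWpos : ∀ i, 0 < Real.exp (∑ j ∈ s, μ j * B j i) * W i :=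
          fun i => mul_pos (Real.exp_pos _) (hW i)
        calc h (fun i => Real.exp (∑ j' ∈ insert j s, μ j' * B j' i) * W i)
            = h (fun i => Real.exp (μ j) ^ (B j i)
                * (Real.exp (∑ j' ∈ s, μ j' * B j' i) * W i)) := by
              congr 1; funext i
              rw [Finset.sum_insert hj, Real.exp_add,
                Real.rpow_def_of_pos (Real.exp_pos _), Real.log_exp]
              ring
          _ = Real.exp (μ j) ^ (a j)
                * h (fun i => Real.exp (∑ j' ∈ s, μ j' * B j' i) * W i) :=
              hscale j _ _ (Real.exp_pos _) hWpos
          _ = Real.exp (∑ j' ∈ insert j s, μ j' * a j') * h W := by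
              rw [ih, Real.rpow_def_of_pos (Real.exp_pos _), Real.log_exp,
                Finset.sum_insert hj, Real.exp_add]
              ring
    exact key Finset.univ
  -- products of rpow as exponentials
  have prod_rpow : ∀ (W : Fin n → ℝ), (∀ i, 0 < W i) → ∀ c : Fin n → ℝ,
      (∏ i, W i ^ (c i)) = Real.exp (∑ i, Real.log (W i) * c i) := by
    intro W hW c
    rw [Real.exp_sum]
    exact Finset.prod_congr rfl fun i _ => Real.rpow_def_of_pos (hW i) _
  -- well-definedness
  have key : ∀ W W' : Fin n → ℝ, (∀ i, 0 < W i) → (∀ i, 0 < W' i) →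
      (∀ l, (∏ i, W i ^ (x l i)) = ∏ i, W' i ^ (x l i)) →
      h W * ∏ i, W i ^ (-y i) = h W' * ∏ i, W' i ^ (-y i) := by
    intro W W' hW hW' hpi
    set u : Fin n → ℝ := fun i => Real.log (W' i) - Real.log (W i) with hu
    have hu_ker : u ∈ LinearMap.ker X.mulVecLin := by
      rw [LinearMap.mem_ker]
      funext l
      have := hpi l
      rw [prod_rpow W hW, prod_rpow W' hW'] at this
      have hsum : ∑ i, Real.log (W i) * x l i = ∑ i, Real.log (W' i) * x l i :=
        Real.exp_injective this
      simp only [Matrix.mulVecLin_apply, Matrix.mulVec, dotProduct, Pi.zero_apply]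
      calc ∑ i, X l i * u i
          = ∑ i, (Real.log (W' i) * x l i - Real.log (W i) * x l i) := by
            apply Finset.sum_congr rfl; intro i _
            simp only [hu, hXdef, Matrix.of_apply]; ring
        _ = 0 := by rw [Finset.sum_sub_distrib, ← hsum, sub_self]
    rw [← hSK] at hu_ker
    obtain ⟨μ, hμ⟩ := hu_ker
    have huexp : ∀ i, u i = ∑ j, μ j * B j i := by
      intro i
      have := congrFun hμ i
      simp only [Matrix.mulVecLin_apply, Matrix.mulVec, dotProduct,
        Matrix.transpose_apply] at this
      rw [← this]
      apply Finset.sum_congr rfl; intro j _; ring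
    have hW'eq : W' = fun i => Real.exp (∑ j, μ j * B j i) * W i := by
      funext i
      rw [← huexp i, hu]
      rw [Real.exp_sub, Real.exp_log (hW' i), Real.exp_log (hW i),
        div_mul_cancel₀ _ (ne_of_gt (hW i))]
    have hhW' : h W' = Real.exp (∑ j, μ j * a j) * h W := by
      rw [hW'eq]; exact hscale_sum μ W hW
    have huy : ∑ i, u i * y i = ∑ j, μ j * a j := by
      calc ∑ i, u i * y i
          = ∑ i, ∑ j, μ j * (B j i * y i) := by
            apply Finset.sum_congr rfl; intro i _
            rw [huexp i, Finset.sum_mul]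
            apply Finset.sum_congr rfl; intro j _; ring
        _ = ∑ j, μ j * ∑ i, B j i * y i := by
            rw [Finset.sum_comm]
            apply Finset.sum_congr rfl; intro j _
            rw [Finset.mul_sum]
        _ = ∑ j, μ j * a j := by
            apply Finset.sum_congr rfl; intro j _
            have := congrFun hy j
            simp only [Matrix.mulVec, dotProduct] at this
            rw [this]
    have hprod : (∏ i, W' i ^ (-y i))
        = Real.exp (-(∑ j, μ j * a j)) * ∏ i, W i ^ (-y i) := by
      rw [prod_rpow W hW, prod_rpow W' hW', ← Real.exp_add]
      congr 1
      have : ∀ i, Real.log (W' i) = u i + Real.log (W i) := by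
        intro i; rw [hu]; ring
      calc ∑ i, Real.log (W' i) * (-y i)
          = ∑ i, (-(u i * y i) + Real.log (W i) * (-y i)) := by
            apply Finset.sum_congr rfl; intro i _
            rw [this i]; ring
        _ = -(∑ j, μ j * a j) + ∑ i, Real.log (W i) * (-y i) := by
            rw [Finset.sum_add_distrib, Finset.sum_neg_distrib, huy]
    rw [hhW', hprod, mul_mul_mul_comm, ← Real.exp_add, add_neg_cancel,
      Real.exp_zero, one_mul]
  -- surjectivity onto positive tuples
  have hsurj' : ∀ p : Fin k → ℝ, (∀ l, 0 < p l) → ∃ W : Fin n → ℝ,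
      (∀ i, 0 < W i) ∧ ∀ l, (∏ i, W i ^ (x l i)) = p l := by
    intro p hp
    obtain ⟨v, hv⟩ := hsurjlin (fun l => Real.log (p l))
    refine ⟨fun i => Real.exp (v i), fun i => Real.exp_pos _, fun l => ?_⟩
    rw [prod_rpow _ (fun i => Real.exp_pos _)]
    have := congrFun hv l
    simp only [Matrix.mulVecLin_apply, Matrix.mulVec, dotProduct] at this
    have hsum : ∑ i, Real.log (Real.exp (v i)) * x l i = Real.log (p l) := by
      rw [← this]
      apply Finset.sum_congr rfl; intro i _
      rw [Real.log_exp]; simp only [hXdef, Matrix.of_apply]; ring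
    rw [hsum, Real.exp_log (hp l)]
  refine ⟨fun p => if hp : ∃ W : Fin n → ℝ,
      (∀ i, 0 < W i) ∧ ∀ l, (∏ i, W i ^ (x l i)) = p l
      then h hp.choose * ∏ i, hp.choose i ^ (-y i) else 1, ?_, ?_⟩
  · intro p hp
    dsimp only
    rw [dif_pos (hsurj' p hp)]
    have hspec := (hsurj' p hp).choose_spec
    exact mul_pos (hpos _ hspec.1)
      (Finset.prod_pos fun i _ => Real.rpow_pos_of_pos (hspec.1 i) _)
  · intro W hW
    have hex : ∃ W0 : Fin n → ℝ, (∀ i, 0 < W0 i) ∧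
        ∀ l, (∏ i, W0 i ^ (x l i)) = ∏ i, W i ^ (x l i) :=
      ⟨W, hW, fun l => rfl⟩
    dsimp only
    rw [dif_pos hex]
    exact key W hex.choose hW hex.choose_spec.1 fun l => (hex.choose_spec.2 l).symm
end

section
/- Let m, n be natural numbers, B an m×n real matrix with rank(B) = n, and a ∈ ℝᵐ. Let h be a real-valued function on n-tuples of positive reals taking positive values, satisfying for every j ∈ {1,…,m}, every λ > 0 and every positive W: h(λ^(B_{j1})·W₁, …, λ^(B_{jn})·Wₙ) = λ^(a_j) · h(W₁,…,Wₙ). Let y ∈ ℝⁿ be a solution of B·y = a (which is unique since rank(B) = n). Then there exists a constant c > 0 such that h(W₁,…,Wₙ) = c · ∏_{i=1}^{n} Wᵢ^(yᵢ) for all positive W. -/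
/-- Pi-Theorem in the case `k = 0`: if the dimension matrix has full column
rank, the dimensionally invariant function `h` is a constant multiple of a
monomial. -/
theorem pi_theorem_full_rank
    (m n : ℕ)
    (B : Matrix (Fin m) (Fin n) ℝ) (a : Fin m → ℝ)
    (hrank : B.rank = n)
    (h : (Fin n → ℝ) → ℝ)
    (hpos : ∀ W : Fin n → ℝ, (∀ i, 0 < W i) → 0 < h W)
    (hscale : ∀ (j : Fin m) (lam : ℝ) (W : Fin n → ℝ), 0 < lam → (∀ i, 0 < W i) →
      h (fun i => lam ^ (B j i) * W i) = lam ^ (a j) * h W)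
    (y : Fin n → ℝ) (hy : B.mulVec y = a) :
    ∃ c : ℝ, 0 < c ∧ ∀ W : Fin n → ℝ, (∀ i, 0 < W i) →
      h W = c * ∏ i, W i ^ (y i) := by
  -- B.transpose.mulVec is surjective since rank B.transpose = rank B = n
  have hsurj : Function.Surjective (B.transpose.mulVec) := by
    have h1 : B.transpose.rank = n := by rw [Matrix.rank_transpose]; exact hrank
    have h2 : LinearMap.range B.transpose.mulVecLin = ⊤ := by
      apply Submodule.eq_top_of_finrank_eq
      rw [Matrix.rank] at h1
      simpa using h1
    intro v
    have hv : v ∈ LinearMap.range B.transpose.mulVecLin := h2 ▸ Submodule.mem_top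
    obtain ⟨t, ht⟩ := hv
    exact ⟨t, ht⟩
  -- key scaling lemma over finsets
  have key : ∀ (t : Fin m → ℝ) (S : Finset (Fin m)) (W : Fin n → ℝ), (∀ i, 0 < W i) →
      h (fun i => Real.exp (∑ j ∈ S, B j i * t j) * W i)
        = Real.exp (∑ j ∈ S, a j * t j) * h W := by
    intro t S W hW
    induction S using Finset.induction with
    | empty => simp
    | @insert j S hj ih =>
      have hWpos : ∀ i, 0 < Real.exp (∑ j ∈ S, B j i * t j) * W i :=
        fun i => mul_pos (Real.exp_pos _) (hW i)
      have hs := hscale j (Real.exp (t j)) (fun i => Real.exp (∑ j ∈ S, B j i * t j) * W i)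
        (Real.exp_pos _) hWpos
      have hrp : ∀ b : ℝ, Real.exp (t j) ^ b = Real.exp (b * t j) := by
        intro b
        rw [Real.rpow_def_of_pos (Real.exp_pos _), Real.log_exp, mul_comm]
      have hfun : (fun i => Real.exp (∑ j' ∈ insert j S, B j' i * t j') * W i)
          = (fun i => Real.exp (t j) ^ (B j i) *
              (Real.exp (∑ j' ∈ S, B j' i * t j') * W i)) := by
        funext i
        rw [Finset.sum_insert hj, hrp, Real.exp_add, mul_assoc]
      rw [hfun, hs, ih, Finset.sum_insert hj, hrp, Real.exp_add, mul_assoc]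
  -- main argument
  refine ⟨h (fun _ => 1), hpos _ (fun _ => one_pos), ?_⟩
  intro W hW
  obtain ⟨t, ht⟩ := hsurj (fun i => Real.log (W i))
  have htE : ∀ i, ∑ j, B j i * t j = Real.log (W i) := by
    intro i
    have := congrFun ht i
    simpa [Matrix.mulVec, dotProduct, Matrix.transpose_apply] using this
  have hWe : W = fun i => Real.exp (∑ j, B j i * t j) * 1 := by
    funext i
    rw [htE i, Real.exp_log (hW i), mul_one]
  have hmain : h W = Real.exp (∑ j, a j * t j) * h (fun _ => 1) := by
    rw [hWe]
    simpa using key t Finset.univ (fun _ => 1) (fun _ => one_pos)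
  have ha : ∀ j, a j = ∑ i, B j i * y i := by
    intro j
    have := congrFun hy j
    simpa [Matrix.mulVec, dotProduct] using this.symm
  have hsum : ∑ j, a j * t j = ∑ i, Real.log (W i) * y i := by
    simp_rw [ha, Finset.sum_mul, ← htE]
    rw [Finset.sum_comm]
    congr 1; funext i
    rw [Finset.sum_mul]
    congr 1; funext j; ring
  have hexp : Real.exp (∑ j, a j * t j) = ∏ i, W i ^ (y i) := by
    rw [hsum, Real.exp_sum]
    apply Finset.prod_congr rfl
    intro i _
    rw [Real.rpow_def_of_pos (hW i)]
  rw [hmain, hexp, mul_comm]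
end

section
/- Let m, n be natural numbers, B an m×n real matrix with rank(B) = n − 1, and a ∈ ℝᵐ. Let h be a real-valued function on n-tuples of positive reals taking positive values, satisfying for every j ∈ {1,…,m}, every λ > 0 and every positive W: h(λ^(B_{j1})·W₁, …, λ^(B_{jn})·Wₙ) = λ^(a_j) · h(W₁,…,Wₙ). Let x ∈ ℝⁿ be a nonzero solution of B·x = 0 and y ∈ ℝⁿ a solution of B·y = a. Then there exists a function f : (0,∞) → (0,∞) such that h(W₁,…,Wₙ) = f(∏_{i=1}^{n} Wᵢ^(xᵢ)) · ∏_{i=1}^{n} Wᵢ^(yᵢ) for all positive W. -/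
open Matrix Real

/-- Pi-Theorem in the case `k = 1`: if the dimension matrix has rank `n − 1`,
the dimensionally invariant function `h` is a monomial times a function of the
single dimensionless combination. -/
theorem pi_theorem_corank_one
    (m n : ℕ)
    (B : Matrix (Fin m) (Fin n) ℝ) (a : Fin m → ℝ)
    (hrank : B.rank = n - 1)
    (h : (Fin n → ℝ) → ℝ)
    (hpos : ∀ W : Fin n → ℝ, (∀ i, 0 < W i) → 0 < h W)
    (hscale : ∀ (j : Fin m) (lam : ℝ) (W : Fin n → ℝ), 0 < lam → (∀ i, 0 < W i) →
      h (fun i => lam ^ (B j i) * W i) = lam ^ (a j) * h W)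
    (x : Fin n → ℝ) (hx_ne : x ≠ 0) (hx : B.mulVec x = 0)
    (y : Fin n → ℝ) (hy : B.mulVec y = a) :
    ∃ f : ℝ → ℝ, (∀ t : ℝ, 0 < t → 0 < f t) ∧
      ∀ W : Fin n → ℝ, (∀ i, 0 < W i) →
        h W = f (∏ i, W i ^ (x i)) * ∏ i, W i ^ (y i) := by
  classical
  have hn : 0 < n := by
    rcases Nat.eq_zero_or_pos n with h0 | h0
    · subst h0; exact absurd (funext fun i => i.elim0) hx_ne
    · exact h0
  set c : ℝ := x ⬝ᵥ x with hc_def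
  have hcne : c ≠ 0 := fun hc0 => hx_ne (dotProduct_self_eq_zero.mp hc0)
  -- the dot-product-with-x linear functional
  let φ : (Fin n → ℝ) →ₗ[ℝ] ℝ :=
    { toFun := fun v => x ⬝ᵥ v
      map_add' := fun u v => dotProduct_add x u v
      map_smul' := fun r v => by simp [dotProduct, Finset.mul_sum, mul_left_comm] }
  -- range of Bᵀ equals ker φ
  have hle : LinearMap.range (Bᵀ.mulVecLin) ≤ LinearMap.ker φ := by
    rintro v ⟨w, rfl⟩
    show x ⬝ᵥ Bᵀ.mulVec w = 0
    rw [dotProduct_mulVec, vecMul_transpose, hx, zero_dotProduct]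
  have hφsurj : LinearMap.range φ = ⊤ := by
    rw [LinearMap.range_eq_top]
    intro r
    refine ⟨(r / c) • x, ?_⟩
    show x ⬝ᵥ ((r / c) • x) = r
    rw [dotProduct_smul, smul_eq_mul, ← hc_def, div_mul_cancel₀ _ hcne]
  have hker : Module.finrank ℝ (LinearMap.ker φ) = n - 1 := by
    have h1 := LinearMap.finrank_range_add_finrank_ker φ
    rw [hφsurj, finrank_top, Module.finrank_self, Module.finrank_fin_fun] at h1
    omega
  have hrange : Module.finrank ℝ (LinearMap.range Bᵀ.mulVecLin) = n - 1 := by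
    have : Bᵀ.rank = n - 1 := by rw [Matrix.rank_transpose, hrank]
    exact this
  have hRK : LinearMap.range (Bᵀ.mulVecLin) = LinearMap.ker φ :=
    Submodule.eq_of_le_of_finrank_eq hle (hrange.trans hker.symm)
  have hmem : ∀ v : Fin n → ℝ, x ⬝ᵥ v = 0 → ∃ w, Bᵀ.mulVec w = v := by
    intro v hv
    have : v ∈ LinearMap.range (Bᵀ.mulVecLin) := by rw [hRK]; exact hv
    obtain ⟨w, hw⟩ := this
    exact ⟨w, hw⟩
  -- multi-scaling invariance
  have claimA : ∀ (w : Fin m → ℝ) (W : Fin n → ℝ), (∀ i, 0 < W i) →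
      ∀ S : Finset (Fin m),
      h (fun i => Real.exp (∑ j ∈ S, w j * B j i) * W i)
        = Real.exp (∑ j ∈ S, w j * a j) * h W := by
    intro w W hW S
    induction S using Finset.induction_on with
    | empty => simp
    | @insert j S hj ih =>
      have key := hscale j (Real.exp (w j))
        (fun i => Real.exp (∑ k ∈ S, w k * B k i) * W i)
        (Real.exp_pos _) (fun i => mul_pos (Real.exp_pos _) (hW i))
      calc h (fun i => Real.exp (∑ k ∈ insert j S, w k * B k i) * W i)
          = h (fun i => Real.exp (w j) ^ (B j i)
              * (Real.exp (∑ k ∈ S, w k * B k i) * W i)) := by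
            congr 1; funext i
            rw [Finset.sum_insert hj, Real.exp_add, ← Real.exp_mul, mul_assoc]
        _ = Real.exp (w j) ^ (a j)
              * h (fun i => Real.exp (∑ k ∈ S, w k * B k i) * W i) := key
        _ = Real.exp (w j * a j) * (Real.exp (∑ k ∈ S, w k * a k) * h W) := by
            rw [ih, ← Real.exp_mul]
        _ = Real.exp (∑ k ∈ insert j S, w k * a k) * h W := by
            rw [Finset.sum_insert hj, Real.exp_add, mul_assoc]
  -- log-coordinates function
  set P : (Fin n → ℝ) → ℝ := fun u => h (fun i => Real.exp (u i)) with hP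
  have hPpos : ∀ u, 0 < P u := fun u => hpos _ (fun i => Real.exp_pos _)
  have hPshift : ∀ (u : Fin n → ℝ) (w : Fin m → ℝ),
      P (u + Bᵀ.mulVec w) = Real.exp (w ⬝ᵥ a) * P u := by
    intro u w
    have hA := claimA w (fun i => Real.exp (u i)) (fun i => Real.exp_pos _) Finset.univ
    have heq : (fun i => Real.exp ((u + Bᵀ.mulVec w) i))
        = fun i => Real.exp (∑ j, w j * B j i) * Real.exp (u i) := by
      funext i
      rw [← Real.exp_add]
      congr 1
      simp only [Pi.add_apply, Matrix.mulVec, dotProduct, Matrix.transpose_apply]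
      rw [add_comm]
      congr 1
      exact Finset.sum_congr rfl fun j _ => mul_comm _ _
    rw [hP]
    simp only [heq]
    rw [hA]
    rfl
  -- the invariant quotient
  have hQ : ∀ u : Fin n → ℝ,
      P u / Real.exp (u ⬝ᵥ y)
        = P (((x ⬝ᵥ u) / c) • x) / Real.exp ((((x ⬝ᵥ u) / c) • x) ⬝ᵥ y) := by
    intro u
    set s : ℝ := (x ⬝ᵥ u) / c with hs
    have hvperp : x ⬝ᵥ (u - s • x) = 0 := by
      rw [dotProduct_sub, dotProduct_smul, smul_eq_mul, ← hc_def, hs,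
        div_mul_cancel₀ _ hcne, sub_self]
    obtain ⟨w, hw⟩ := hmem _ hvperp
    have hu : u = s • x + Bᵀ.mulVec w := by rw [hw]; abel
    have hdot : (Bᵀ.mulVec w) ⬝ᵥ y = w ⬝ᵥ a := by
      rw [dotProduct_comm, dotProduct_mulVec, vecMul_transpose, hy, dotProduct_comm]
    rw [hu, hPshift, add_dotProduct, hdot, Real.exp_add, mul_comm (Real.exp _) (Real.exp (w ⬝ᵥ a))]
    rw [mul_div_mul_left _ _ (Real.exp_ne_zero _)]
  refine ⟨fun t => P (((Real.log t) / c) • x)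
      / Real.exp (((Real.log t / c) • x) ⬝ᵥ y), fun t _ => ?_, ?_⟩
  · exact div_pos (hPpos _) (Real.exp_pos _)
  · intro W hW
    set u : Fin n → ℝ := fun i => Real.log (W i) with hu
    have hWu : W = fun i => Real.exp (u i) := funext fun i => (Real.exp_log (hW i)).symm
    have hprod : ∀ z : Fin n → ℝ, (∏ i, W i ^ (z i)) = Real.exp (u ⬝ᵥ z) := by
      intro z
      rw [dotProduct, Real.exp_sum]
      exact Finset.prod_congr rfl fun i _ => by
        rw [Real.rpow_def_of_pos (hW i)]
    have hlog : Real.log (∏ i, W i ^ (x i)) = x ⬝ᵥ u := by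
      rw [hprod x, Real.log_exp, dotProduct_comm]
    have hhW : h W = P u := by conv_lhs => rw [hWu]
    show h W = P ((Real.log (∏ i, W i ^ (x i)) / c) • x)
        / Real.exp (((Real.log (∏ i, W i ^ (x i)) / c) • x) ⬝ᵥ y) * ∏ i, W i ^ (y i)
    rw [hlog, ← hQ u, hprod y, hhW, div_mul_cancel₀ _ (Real.exp_ne_zero _)]
end

section
/- For T > 0 let V(T) = ∫∫ (round(x + y))² dμ(x) dν_T(y), where μ is the uniform probability measure on [−1/2, 1/2], ν_T is the Gaussian measure on ℝ with mean 0 and variance T, and round(x) denotes the integer nearest to x (i.e. round(x) = ⌊x + 1/2⌋). Then V(T)/√T converges to √(2/π) as T → 0⁺; equivalently, √(π/(2T))·V(T) → 1 as T → 0⁺. -/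
/-!
For `|y| ≤ 1` the mean of `round (X + y) ^ 2` over `X` uniform on `[-1/2, 1/2]` is exactly `|y|`,
since `round (X + y)` is `0` or `±1`, the latter on a set of length `|y|`; for all `y` it differs
from `|y|` by at most `4 y²`. Integrating against `N(0, T)` gives
`V(T) = E|Y| + O(E[Y²]) = √(2T/π) + O(T)`.
-/

open MeasureTheory ProbabilityTheory Real Set Filter Topology
open scoped NNReal

lemma integral_Ioi_mul_exp_neg_mul_sq {b : ℝ} (hb : 0 < b) :
    ∫ x in Ioi (0 : ℝ), x * rexp (-b * x ^ 2) = (2 * b)⁻¹ := by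
  apply Complex.ofReal_injective
  rw [← integral_complex_ofReal]
  push_cast
  exact integral_mul_cexp_neg_mul_sq (b := b) (by simpa using hb)

lemma integral_sq_gaussianReal (μ : ℝ) (v : ℝ≥0) :
    ∫ y, y ^ 2 ∂gaussianReal μ v = μ ^ 2 + v := by
  have h := variance_eq_sub (memLp_id_gaussianReal (μ := μ) (v := v) 2)
  rw [variance_id_gaussianReal] at h
  simp only [id, Pi.pow_apply] at h
  rw [integral_id_gaussianReal] at h
  linarith

lemma integral_abs_gaussianReal (v : ℝ≥0) :
    ∫ y, |y| ∂gaussianReal 0 v = √(2 / π) * √v := by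
  rcases eq_or_ne v 0 with rfl | hv
  · simp [gaussianReal_zero_var]
  have hv' : (0 : ℝ) < v := by positivity
  have hpdf : ∀ y, gaussianPDFReal 0 v y • |y|
      = (√(2 * π * v))⁻¹ * (|y| * rexp (-(2 * v : ℝ)⁻¹ * |y| ^ 2)) := by
    intro y
    rw [gaussianPDFReal, smul_eq_mul, sq_abs, sub_zero]
    ring_nf
  have hs : √(2 / π) * √v * √(2 * π * v) = 2 * v := by
    rw [← sqrt_mul (by positivity), ← sqrt_mul (by positivity),
      show 2 / π * v * (2 * π * v) = (2 * v) ^ 2 by field_simp, sqrt_sq (by positivity)]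
  rw [integral_gaussianReal_eq_integral_smul hv]
  simp_rw [hpdf]
  rw [integral_const_mul, integral_comp_abs (f := fun t => t * rexp (-(2 * v : ℝ)⁻¹ * t ^ 2)),
    integral_Ioi_mul_exp_neg_mul_sq (by positivity), ← hs]
  field_simp

lemma setIntegral_Ico_of_const_on_Ico_Ico {f : ℝ → ℝ} {a b c α β : ℝ} (hab : a ≤ b) (hbc : b ≤ c)
    (hα : ∀ x ∈ Ico a b, f x = α) (hβ : ∀ x ∈ Ico b c, f x = β) :
    ∫ x in Ico a c, f x = α * (b - a) + β * (c - b) := by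
  have hint : ∀ {s : Set ℝ} {γ : ℝ}, MeasurableSet s → volume s < ⊤ → (∀ x ∈ s, f x = γ) →
      IntegrableOn f s := fun hs hfin hγ =>
    (integrableOn_const hfin.ne).congr_fun (fun x hx => (hγ x hx).symm) hs
  rw [← Ico_union_Ico_eq_Ico hab hbc, setIntegral_union Ico_disjoint_Ico_same measurableSet_Ico
      (hint measurableSet_Ico measure_Ico_lt_top hα) (hint measurableSet_Ico measure_Ico_lt_top hβ),
    setIntegral_congr_fun measurableSet_Ico hα, setIntegral_congr_fun measurableSet_Ico hβ,
    setIntegral_const, setIntegral_const, volume_real_Ico_of_le hab, volume_real_Ico_of_le hbc,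
    smul_eq_mul, smul_eq_mul, mul_comm α, mul_comm β]

@[fun_prop]
lemma measurable_round : Measurable (round : ℝ → ℤ) := by
  simp_rw [funext round_eq]
  exact Int.measurable_floor.comp (measurable_add_const _)

lemma abs_round_le (x : ℝ) : |(round x : ℝ)| ≤ |x| + 1 / 2 := by
  linarith [abs_sub_round x, abs_sub_abs_le_abs_sub (round x : ℝ) x, abs_sub_comm (round x : ℝ) x]

lemma round_add_sq_le {x : ℝ} (hx : x ∈ Icc (-(1 / 2)) (1 / 2)) (y : ℝ) :
    (round (x + y) : ℝ) ^ 2 ≤ (|y| + 1) ^ 2 := by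
  have hx' : |x| ≤ 1 / 2 := abs_le.mpr hx
  rw [← sq_abs]
  gcongr
  linarith [abs_round_le (x + y), abs_add_le x y]

/-- `E[round (X + y) ^ 2]` for `X` uniform on `[-1/2, 1/2]`. -/
noncomputable def roundSqMean (y : ℝ) : ℝ :=
  ∫ x in Icc (-(1 / 2)) (1 / 2), (round (x + y) : ℝ) ^ 2

lemma roundSqMean_of_abs_le_one {y : ℝ} (hy : |y| ≤ 1) : roundSqMean y = |y| := by
  rw [abs_le] at hy
  rw [roundSqMean, integral_Icc_eq_integral_Ico]
  rcases le_total 0 y with hy0 | hy0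
  · rw [setIntegral_Ico_of_const_on_Ico_Ico (b := 1 / 2 - y) (α := 0) (β := 1) (by linarith)
      (by linarith), abs_of_nonneg hy0]
    · ring
    all_goals
      intro x hx
      rw [mem_Ico] at hx
    · rw [show round (x + y) = 0 from round_eq_iff.mpr
        ⟨by push_cast; linarith, by push_cast; linarith⟩]
      simp
    · rw [show round (x + y) = 1 from round_eq_iff.mpr
        ⟨by push_cast; linarith, by push_cast; linarith⟩]
      simp
  · rw [setIntegral_Ico_of_const_on_Ico_Ico (b := -(1 / 2) - y) (α := 1) (β := 0) (by linarith)
      (by linarith), abs_of_nonpos hy0]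
    · ring
    all_goals
      intro x hx
      rw [mem_Ico] at hx
    · rw [show round (x + y) = -1 from round_eq_iff.mpr
        ⟨by push_cast; linarith, by push_cast; linarith⟩]
      simp
    · rw [show round (x + y) = 0 from round_eq_iff.mpr
        ⟨by push_cast; linarith, by push_cast; linarith⟩]
      simp

lemma roundSqMean_le (y : ℝ) : roundSqMean y ≤ (|y| + 1) ^ 2 := by
  have hint : IntegrableOn (fun x : ℝ => (round (x + y) : ℝ) ^ 2) (Icc (-(1 / 2)) (1 / 2)) := by
    refine (integrable_const ((|y| + 1) ^ 2)).mono'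
      (by fun_prop : Measurable _).aestronglyMeasurable ?_
    filter_upwards [ae_restrict_mem measurableSet_Icc] with x hx
    rw [norm_of_nonneg (sq_nonneg _)]
    exact round_add_sq_le hx y
  have h := setIntegral_mono_on hint (integrable_const ((|y| + 1) ^ 2)) measurableSet_Icc
    (fun x hx => round_add_sq_le hx y)
  rwa [setIntegral_const, volume_real_Icc_of_le (by norm_num), smul_eq_mul,
    show (1 / 2 - -(1 / 2) : ℝ) = 1 by norm_num, one_mul] at h

lemma abs_roundSqMean_sub_abs_le (y : ℝ) : abs (roundSqMean y - |y|) ≤ 4 * y ^ 2 := by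
  rcases le_or_gt |y| 1 with hy | hy
  · rw [roundSqMean_of_abs_le_one hy, sub_self, abs_zero]
    positivity
  · have h0 : 0 ≤ roundSqMean y := setIntegral_nonneg measurableSet_Icc fun _ _ => sq_nonneg _
    have h1 := roundSqMean_le y
    rw [abs_le]
    constructor <;> nlinarith [sq_abs y]

section Fubini

variable {ν : Measure ℝ} [IsFiniteMeasure ν]

lemma integrable_round_add_sq_prod (h2 : Integrable (fun y => y ^ 2) ν) :
    Integrable (fun p : ℝ × ℝ => (round (p.1 + p.2) : ℝ) ^ 2)
      ((volume.restrict (Icc (-(1 / 2)) (1 / 2))).prod ν) := by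
  refine (((h2.const_mul 2).add (integrable_const 2)).comp_snd _).mono'
    (by fun_prop : Measurable _).aestronglyMeasurable ?_
  filter_upwards [Measure.quasiMeasurePreserving_fst.ae (ae_restrict_mem measurableSet_Icc)]
    with p hp
  rw [norm_of_nonneg (sq_nonneg _), Pi.add_apply]
  nlinarith [round_add_sq_le hp p.2, sq_abs p.2, sq_nonneg (|p.2| - 1)]

lemma integral_Icc_integral_round_add_sq (h2 : Integrable (fun y => y ^ 2) ν) :
    ∫ x in Icc (-(1 / 2)) (1 / 2), ∫ y, (round (x + y) : ℝ) ^ 2 ∂ν = ∫ y, roundSqMean y ∂ν :=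
  integral_integral_swap (integrable_round_add_sq_prod h2)

lemma abs_integral_roundSqMean_sub_le (h2 : Integrable (fun y => y ^ 2) ν)
    (h1 : Integrable (fun y => |y|) ν) :
    |∫ y, roundSqMean y ∂ν - ∫ y, |y| ∂ν| ≤ 4 * ∫ y, y ^ 2 ∂ν := by
  have hg : Integrable roundSqMean ν := (integrable_round_add_sq_prod h2).swap.integral_prod_left
  rw [← integral_sub hg h1, ← integral_const_mul]
  exact abs_integral_le_integral_abs.trans
    (integral_mono (hg.sub h1).abs (h2.const_mul 4) abs_roundSqMean_sub_abs_le)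

end Fubini

lemma abs_integral_round_add_sq_gaussianReal_sub_le {T : ℝ} (hT : 0 ≤ T) :
    |(∫ x in Icc (-(1 / 2)) (1 / 2), ∫ y, (round (x + y) : ℝ) ^ 2 ∂gaussianReal 0 T.toNNReal)
      - √(2 / π) * √T| ≤ 4 * T := by
  have h2 : Integrable (fun y => y ^ 2) (gaussianReal 0 T.toNNReal) :=
    (memLp_id_gaussianReal 2).integrable_sq
  have h1 : Integrable (fun y => |y|) (gaussianReal 0 T.toNNReal) :=
    ((memLp_id_gaussianReal 1).integrable le_rfl).abs
  have h := abs_integral_roundSqMean_sub_le h2 h1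
  rwa [integral_sq_gaussianReal, integral_abs_gaussianReal, Real.coe_toNNReal _ hT,
    ← integral_Icc_integral_round_add_sq h2, zero_pow two_ne_zero, zero_add] at h

/-- Sub-diffusive scaling of rounded Brownian motion: with `X` uniform on
`[−1/2, 1/2]` and `Y` Gaussian with mean `0` and variance `T`,
`V(T) = E[(round(X + Y))²]` satisfies `V(T)/√T → √(2/π)` as `T → 0⁺`. -/
theorem rounded_brownian_variance_scaling :
    Filter.Tendsto
      (fun T : ℝ =>
        (∫ x in Set.Icc (-(1 / 2) : ℝ) (1 / 2),
            ∫ y, ((round (x + y) : ℝ)) ^ 2 ∂(gaussianReal 0 T.toNNReal))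
          / Real.sqrt T)
      (nhdsWithin 0 (Set.Ioi 0)) (nhds (Real.sqrt (2 / π))) := by
  have hbound : Tendsto (fun T : ℝ => 4 * √T) (𝓝[>] 0) (𝓝 0) := by
    have hc : Continuous fun T : ℝ => 4 * √T := by fun_prop
    simpa using (hc.tendsto 0).mono_left nhdsWithin_le_nhds
  refine tendsto_sub_nhds_zero_iff.mp (squeeze_zero_norm' ?_ hbound)
  filter_upwards [self_mem_nhdsWithin] with T (hT : 0 < T)
  have hsT : 0 < √T := sqrt_pos.mpr hT
  rw [norm_eq_abs, ← mul_div_cancel_right₀ (√(2 / π)) hsT.ne', ← sub_div, abs_div,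
    abs_of_pos hsT, div_le_iff₀ hsT, mul_assoc, mul_self_sqrt hT.le]
  exact abs_integral_round_add_sq_gaussianReal_sub_le hT.le
end
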